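/- (Bias of CDR with estimated click probabilities equals the bias of CIPS.) Given estimated click probabilities p̂_c : 𝒳 → 𝒜 → ℛ → ℝ, set p̂_c(x,a,μ) := E_{A∼μ(x)}[p̂_c(x,a,A)] for a policy μ and ŵ(x,a) := p̂_c(x,a,π)/p̂_c(x,a,π₀) (with t/0 := 0), and given any reward model q̂_r : 𝒳 → 𝒜 → ℝ, define the single-sample CDR value with estimated clicks f̂_CDR(x,A,ω) := ∑_{a∈𝒜} [ ŵ(x,a)·( C(ω,a)·R(ω,a) − p̂_c(x,a,A)·q̂_r(x,a) ) + p̂_c(x,a,π)·q̂_r(x,a) ]. Assume the independence of potential rewards condition, the click–reward factorization condition, the click-wise common support condition, and the estimated click-wise common support condition: for every x and a, p̂_c(x,a,π₀) = 0 implies p̂_c(x,a,π) = 0. Then, regardless of the reward model q̂_r, E_{x∼p, A∼π₀(x), ω∼κ(x,A)}[f̂_CDR(x,A,ω)] − V(π) = E_{x∼p}[ ∑_{a∈𝒜} p_c(x,a,π₀)·( ŵ(x,a) − w(x,a) )·q_r(x,a) ], where w(x,a) := p_c(x,a,π)/p_c(x,a,π₀) with t/0 := 0; in particular this bias coincides with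 the bias of CIPS with the same estimated click probabilities. -/

import Mathlib

open scoped BigOperators Classical

/-- Expectation of a real-valued function under a PMF on a finite type. -/
noncomputable def pexp {X : Type*} [Fintype X] (p : PMF X) (f : X → ℝ) : ℝ :=
  ∑ x, (p x).toReal * f x

/-- Variance of a real-valued function under a PMF on a finite type. -/
noncomputable def pvar {X : Type*} [Fintype X] (p : PMF X) (f : X → ℝ) : ℝ :=
  pexp p (fun x => (f x - pexp p f) ^ 2)

/-- Joint distribution of one logged sample (x, A, ω) with x ∼ p, A ∼ π₀(x), ω ∼ κ(x,A). -/
noncomputable def logged {𝒳 ℛ Ω : Type*} (p : PMF 𝒳) (π₀ : 𝒳 → PMF ℛ)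
    (κ : 𝒳 → ℛ → PMF Ω) : PMF (𝒳 × ℛ × Ω) :=
  p.bind fun x => (π₀ x).bind fun A => (κ x A).map fun ω => (x, A, ω)

/-- Click probability of action a at context x given ranking A: p_c(x,a,A). -/
noncomputable def pcA {𝒳 ℛ Ω 𝒜 : Type*} [Fintype Ω]
    (κ : 𝒳 → ℛ → PMF Ω) (C : Ω → 𝒜 → ℝ) (x : 𝒳) (a : 𝒜) (A : ℛ) : ℝ :=
  pexp (κ x A) fun ω => C ω a

/-- Marginalized click probability of action a at context x under policy μ: p_c(x,a,μ). -/
noncomputable def pcPol {𝒳 ℛ Ω 𝒜 : Type*} [Fintype Ω] [Fintype ℛ]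
    (κ : 𝒳 → ℛ → PMF Ω) (C : Ω → 𝒜 → ℝ) (μ : 𝒳 → PMF ℛ) (x : 𝒳) (a : 𝒜) : ℝ :=
  pexp (μ x) fun A => pcA κ C x a A

/-- Policy value V(π). -/
noncomputable def polValue {𝒳 ℛ Ω 𝒜 : Type*} [Fintype 𝒳] [Fintype ℛ] [Fintype Ω] [Fintype 𝒜]
    (p : PMF 𝒳) (π : 𝒳 → PMF ℛ) (κ : 𝒳 → ℛ → PMF Ω) (C R : Ω → 𝒜 → ℝ) : ℝ :=
  pexp p fun x => pexp (π x) fun A => pexp (κ x A) fun ω => ∑ a, C ω a * R ω a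

lemma pexp_bind {X Y : Type*} [Fintype X] [Fintype Y] (p : PMF X) (q : X → PMF Y) (f : Y → ℝ) :
    pexp (p.bind q) f = pexp p (fun x => pexp (q x) f) := by
  simp only [pexp, PMF.bind_apply, tsum_fintype]
  have : ∀ y, ((∑ x, p x * q x y).toReal) * f y
      = ∑ x, (p x).toReal * ((q x y).toReal * f y) := by
    intro y
    rw [ENNReal.toReal_sum (fun a _ => ENNReal.mul_ne_top (PMF.apply_ne_top _ _) (PMF.apply_ne_top _ _)),
      Finset.sum_mul]
    simp [ENNReal.toReal_mul, mul_assoc]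
  simp only [this]
  rw [Finset.sum_comm]
  simp [Finset.mul_sum]

lemma pexp_map {X Y : Type*} [Fintype X] [Fintype Y] (p : PMF X) (g : X → Y) (f : Y → ℝ) :
    pexp (p.map g) f = pexp p (fun x => f (g x)) := by
  simp only [pexp, PMF.map_apply, tsum_fintype]
  have : ∀ y, ((∑ x, if y = g x then p x else 0).toReal) * f y
      = ∑ x, (if y = g x then (p x).toReal * f y else 0) := by
    intro y
    rw [ENNReal.toReal_sum (fun a _ => by split <;> simp [PMF.apply_ne_top]),
      Finset.sum_mul]
    congr 1; ext x; split <;> simp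
  simp only [this]
  rw [Finset.sum_comm]
  congr 1; ext x
  simp

lemma pexp_const {X : Type*} [Fintype X] (p : PMF X) (c : ℝ) :
    pexp p (fun _ => c) = c := by
  simp only [pexp, ← Finset.sum_mul]
  have h1 : ∑ x, (p x).toReal = 1 := by
    rw [← ENNReal.toReal_sum (fun a _ => PMF.apply_ne_top _ _), ← tsum_fintype (L := SummationFilter.unconditional _)]
    rw [p.tsum_coe]; simp
  rw [h1, one_mul]

lemma pexp_sum {X A : Type*} [Fintype X] [Fintype A] (p : PMF X) (f : A → X → ℝ) :
    pexp p (fun x => ∑ a, f a x) = ∑ a, pexp p (f a) := by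
  simp only [pexp, Finset.mul_sum]
  exact Finset.sum_comm

lemma pexp_add {X : Type*} [Fintype X] (p : PMF X) (f g : X → ℝ) :
    pexp p (fun x => f x + g x) = pexp p f + pexp p g := by
  simp [pexp, mul_add, Finset.sum_add_distrib]

lemma pexp_sub {X : Type*} [Fintype X] (p : PMF X) (f g : X → ℝ) :
    pexp p (fun x => f x - g x) = pexp p f - pexp p g := by
  simp [pexp, mul_sub, Finset.sum_sub_distrib]

lemma pexp_const_mul {X : Type*} [Fintype X] (p : PMF X) (c : ℝ) (f : X → ℝ) :
    pexp p (fun x => c * f x) = c * pexp p f := by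
  simp only [pexp, Finset.mul_sum]
  refine Finset.sum_congr rfl fun x _ => by ring

lemma pexp_mul_const {X : Type*} [Fintype X] (p : PMF X) (c : ℝ) (f : X → ℝ) :
    pexp p (fun x => f x * c) = pexp p f * c := by
  simp [pexp, Finset.sum_mul, mul_assoc]

lemma pexp_nonneg {X : Type*} [Fintype X] (p : PMF X) (f : X → ℝ) (h : ∀ x, 0 ≤ f x) :
    0 ≤ pexp p f :=
  Finset.sum_nonneg fun x _ => mul_nonneg ENNReal.toReal_nonneg (h x)


/-- Bias of CDR with estimated click probabilities equals the bias of CIPS with the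
same estimated click probabilities, regardless of the reward model. -/
theorem CDR_bias_estimated_clicks {𝒳 ℛ Ω 𝒜 : Type*}
    [Fintype 𝒳] [Nonempty 𝒳] [Fintype ℛ] [Nonempty ℛ] [Fintype Ω] [Nonempty Ω] [Fintype 𝒜]
    (p : PMF 𝒳) (π π₀ : 𝒳 → PMF ℛ) (κ : 𝒳 → ℛ → PMF Ω)
    (C R : Ω → 𝒜 → ℝ) (hC : ∀ ω a, C ω a = 0 ∨ C ω a = 1)
    (q_r : 𝒳 → 𝒜 → ℝ)
    (hind : ∀ x a A, pexp (κ x A) (fun ω => R ω a) = q_r x a)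
    (hfact : ∀ x a A,
      pexp (κ x A) (fun ω => C ω a * R ω a) = pcA κ C x a A * q_r x a)
    (hsupp : ∀ x a, 0 < pcPol κ C π x a → 0 < pcPol κ C π₀ x a)
    (phat : 𝒳 → 𝒜 → ℛ → ℝ)
    (hsupphat : ∀ x a,
      pexp (π₀ x) (fun A => phat x a A) = 0 → pexp (π x) (fun A => phat x a A) = 0)
    (qhat : 𝒳 → 𝒜 → ℝ) :
    pexp (logged p π₀ κ)
        (fun s => ∑ a,
          (((pexp (π s.1) (fun A => phat s.1 a A)) /
              (pexp (π₀ s.1) (fun A => phat s.1 a A))) *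
              (C s.2.2 a * R s.2.2 a - phat s.1 a s.2.1 * qhat s.1 a)
            + (pexp (π s.1) (fun A => phat s.1 a A)) * qhat s.1 a))
      - polValue p π κ C R
    = pexp p (fun x => ∑ a,
        pcPol κ C π₀ x a *
          ((pexp (π x) (fun A => phat x a A)) / (pexp (π₀ x) (fun A => phat x a A))
            - pcPol κ C π x a / pcPol κ C π₀ x a) * q_r x a) := by
  classical
  have hnn : ∀ (μ : 𝒳 → PMF ℛ) x a, 0 ≤ pcPol κ C μ x a := by
    intro μ x a
    refine pexp_nonneg _ _ fun A => pexp_nonneg _ _ fun ω => ?_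
    rcases hC ω a with h | h <;> simp [h]
  rw [logged, pexp_bind]
  simp only [pexp_bind, pexp_map]
  rw [polValue, ← pexp_sub]
  refine congrArg _ (funext fun x => ?_)
  have h1 : ∀ A, pexp (κ x A) (fun ω => ∑ a,
      ((pexp (π x) (fun A => phat x a A)) / (pexp (π₀ x) (fun A => phat x a A)) *
        (C ω a * R ω a - phat x a A * qhat x a)
        + (pexp (π x) (fun A => phat x a A)) * qhat x a))
      = ∑ a, ((pexp (π x) (fun A => phat x a A)) / (pexp (π₀ x) (fun A => phat x a A)) *
        (pcA κ C x a A * q_r x a - phat x a A * qhat x a)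
        + (pexp (π x) (fun A => phat x a A)) * qhat x a) := by
    intro A
    rw [pexp_sum]
    refine Finset.sum_congr rfl fun a _ => ?_
    rw [pexp_add, pexp_const, pexp_const_mul, pexp_sub, hfact, pexp_const]
  simp only [h1]
  have h2 : pexp (π₀ x) (fun A => ∑ a,
      ((pexp (π x) (fun A => phat x a A)) / (pexp (π₀ x) (fun A => phat x a A)) *
        (pcA κ C x a A * q_r x a - phat x a A * qhat x a)
        + (pexp (π x) (fun A => phat x a A)) * qhat x a))
      = ∑ a, ((pexp (π x) (fun A => phat x a A)) / (pexp (π₀ x) (fun A => phat x a A)) *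
        (pcPol κ C π₀ x a * q_r x a - (pexp (π₀ x) (fun A => phat x a A)) * qhat x a)
        + (pexp (π x) (fun A => phat x a A)) * qhat x a) := by
    rw [pexp_sum]
    refine Finset.sum_congr rfl fun a _ => ?_
    rw [pexp_add, pexp_const, pexp_const_mul, pexp_sub, pexp_mul_const, pexp_mul_const]
    rfl
  rw [h2]
  have h3 : ∀ A, pexp (κ x A) (fun ω => ∑ a, C ω a * R ω a)
      = ∑ a, pcA κ C x a A * q_r x a := by
    intro A
    rw [pexp_sum]
    exact Finset.sum_congr rfl fun a _ => hfact x a A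
  simp only [h3]
  have h4 : pexp (π x) (fun A => ∑ a, pcA κ C x a A * q_r x a)
      = ∑ a, pcPol κ C π x a * q_r x a := by
    rw [pexp_sum]
    exact Finset.sum_congr rfl fun a _ => pexp_mul_const _ _ _
  rw [h4, ← Finset.sum_sub_distrib]
  refine Finset.sum_congr rfl fun a _ => ?_
  have hc : (pexp (π x) (fun A => phat x a A)) / (pexp (π₀ x) (fun A => phat x a A)) *
      (pexp (π₀ x) (fun A => phat x a A)) = pexp (π x) (fun A => phat x a A) := by
    by_cases h0 : pexp (π₀ x) (fun A => phat x a A) = 0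
    · rw [h0, mul_zero, hsupphat x a h0]
    · field_simp
  have hw : pcPol κ C π₀ x a * (pcPol κ C π x a / pcPol κ C π₀ x a) = pcPol κ C π x a := by
    by_cases h0 : pcPol κ C π₀ x a = 0
    · have : ¬ 0 < pcPol κ C π x a := fun h => by
        have := hsupp x a h; rw [h0] at this; exact lt_irrefl 0 this
      have hz : pcPol κ C π x a = 0 := le_antisymm (not_lt.mp this) (hnn π x a)
      rw [h0, hz]; simp
    · field_simp
  linear_combination (-(qhat x a)) * hc + q_r x a * hw
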